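/- Fixed-design GLS setting: for each k ∈ {1,…,n} let X_{-k} ∈ ℝ^{(n−1)×p} be the design matrix with the k-th row x_k ∈ ℝ^p deleted, let Σ_{-k} = (Cov(y_i, y_j))_{i,j≠k} be invertible with X_{-k}^t Σ_{-k}^{-1} X_{-k} invertible, and let the k-th row of the zero-diagonal CV hat matrix H (in its off-diagonal positions) be the GLS hat vector h_k = x_k^t (X_{-k}^t Σ_{-k}^{-1} X_{-k})^{-1} X_{-k}^t Σ_{-k}^{-1}. Under the hypotheses of Theorem 2 and with Cov((y_tr)_j, y_te) = 0 for all j, the CV bias of GLS equals w_cv = (2/n) ∑_{k=1}^n x_k^t (X_{-k}^t Σ_{-k}^{-1} X_{-k})^{-1} X_{-k}^t Σ_{-k}^{-1} σ_{-k,k}, where σ_{-k,k} = (Cov(y_j, y_k))_{j≠k} ∈ ℝ^{n−1}. (The paper's fixed-design formula for w_cv(GLS), showing CV is biased for GLS whenever the training responses are correlated even though GLS does not explicitly exploit the correlation.) -/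

import Mathlib

open MeasureTheory Matrix

/-- Variance `E[(U - E U)^2]` of a real random variable. -/
noncomputable def eVar {Ω : Type*} [MeasurableSpace Ω] (μ : Measure Ω) (U : Ω → ℝ) : ℝ :=
  ∫ ω, (U ω - ∫ ω', U ω' ∂μ) ^ 2 ∂μ

/-- Covariance `E[(U - E U)(V - E V)]` of two real random variables. -/
noncomputable def eCov {Ω : Type*} [MeasurableSpace Ω] (μ : Measure Ω) (U V : Ω → ℝ) : ℝ :=
  ∫ ω, (U ω - ∫ ω', U ω' ∂μ) * (V ω - ∫ ω', V ω' ∂μ) ∂μ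

/-!
For each `k`, expand `E[(y_k - (Hy)_k)²]` as `Var y_k + Var (Hy)_k - 2 Cov(y_k, (Hy)_k)` plus
the squared difference of means. The matching means and variances turn this into
`E[(y_te - h_te · y_tr)²] - 2 Cov(y_k, (Hy)_k)`, using `Cov(y_te, h_te · y_tr) = 0`. Since `H`
has zero diagonal, `Cov(y_k, (Hy)_k) = ∑_{j ≠ k} H_{kj} Cov(y_j, y_k) = h_k · σ_{-k,k}`; averaging
over `k` gives the formula.
-/

open ProbabilityTheory

section Moments

variable {Ω : Type*} [MeasurableSpace Ω] {μ : Measure Ω} {U V U' V' : Ω → ℝ}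

lemma eCov_eq_covariance : eCov μ U V = cov[U, V; μ] := rfl

lemma eVar_eq_variance (hU : AEMeasurable U μ) : eVar μ U = Var[U; μ] :=
  (variance_eq_integral hU).symm

lemma covariance_linear_comb_right {ι : Type*} [Fintype ι] [IsFiniteMeasure μ] {X : ι → Ω → ℝ}
    (hX : ∀ i, MemLp (X i) 2 μ) (hY : MemLp U 2 μ) (c : ι → ℝ) :
    cov[U, fun ω ↦ ∑ i, c i * X i ω; μ] = ∑ i, c i * cov[U, X i; μ] := by
  rw [covariance_fun_sum_right (fun i ↦ (hX i).const_mul (c i)) hY]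
  simp only [covariance_const_mul_right]

variable [IsProbabilityMeasure μ]

lemma integral_sub_sq_eq_variance_add (hU : MemLp U 2 μ) (hV : MemLp V 2 μ) :
    ∫ ω, (U ω - V ω) ^ 2 ∂μ
      = Var[U; μ] - 2 * cov[U, V; μ] + Var[V; μ] + (μ[U] - μ[V]) ^ 2 := by
  have hsq := variance_eq_sub (hU.sub hV)
  simp only [Pi.pow_apply, Pi.sub_apply] at hsq
  rw [variance_sub hU hV, integral_sub (hU.integrable one_le_two) (hV.integrable one_le_two)]
    at hsq
  linarith

lemma integral_sub_sq_eq_of_moments_eq (hU : MemLp U 2 μ) (hV : MemLp V 2 μ)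
    (hU' : MemLp U' 2 μ) (hV' : MemLp V' 2 μ) (hmeanU : μ[U] = μ[U']) (hmeanV : μ[V] = μ[V'])
    (hvarU : Var[U; μ] = Var[U'; μ]) (hvarV : Var[V; μ] = Var[V'; μ])
    (hcov : cov[U', V'; μ] = 0) :
    ∫ ω, (U ω - V ω) ^ 2 ∂μ = ∫ ω, (U' ω - V' ω) ^ 2 ∂μ - 2 * cov[U, V; μ] := by
  rw [integral_sub_sq_eq_variance_add hU hV, integral_sub_sq_eq_variance_add hU' hV',
    hmeanU, hmeanV, hvarU, hvarV, hcov]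
  ring

end Moments

lemma Fin.sum_comp_of_injective_of_ne {M : Type*} [AddCommMonoid M] {n : ℕ} {k : Fin n}
    {e : Fin (n - 1) → Fin n} (he : Function.Injective e) (hne : ∀ j, e j ≠ k)
    {f : Fin n → M} (hf : f k = 0) : ∑ j, f (e j) = ∑ i, f i := by
  classical
  have hrange : Finset.univ.image e = Finset.univ.erase k :=
    Finset.eq_of_subset_of_card_le (fun i hi ↦ by
      obtain ⟨j, -, rfl⟩ := Finset.mem_image.1 hi
      exact Finset.mem_erase.2 ⟨hne j, Finset.mem_univ _⟩)
      (by simp [Finset.card_image_of_injective _ he])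
  refine Fintype.sum_of_injective e he _ f (fun i hi ↦ ?_) (fun _ ↦ rfl)
  by_contra hfi
  have hik : i ≠ k := by rintro rfl; exact hfi hf
  obtain ⟨j, -, rfl⟩ :=
    Finset.mem_image.1 (hrange ▸ Finset.mem_erase.2 ⟨hik, Finset.mem_univ i⟩)
  exact hi ⟨j, rfl⟩

lemma covariance_row_eq_dotProduct {Ω : Type*} [MeasurableSpace Ω] {μ : Measure Ω}
    [IsFiniteMeasure μ] {n : ℕ} {y : Fin n → Ω → ℝ} (hy : ∀ i, MemLp (y i) 2 μ)
    {H : Matrix (Fin n) (Fin n) ℝ} {k : Fin n} (hdiag : H k k = 0)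
    {e : Fin (n - 1) → Fin n} (he : Function.Injective e) (hne : ∀ j, e j ≠ k) :
    cov[y k, fun ω ↦ ∑ j, H k j * y j ω; μ]
      = (fun j ↦ H k (e j)) ⬝ᵥ fun j ↦ cov[y (e j), y k; μ] := by
  rw [covariance_linear_comb_right hy (hy k), dotProduct,
    Fin.sum_comp_of_injective_of_ne he hne (f := fun i ↦ H k i * cov[y i, y k; μ])
      (by simp [hdiag])]
  simp_rw [covariance_comm]

theorem cv_bias_gls_general
    {Ω : Type*} [MeasurableSpace Ω] (μ : Measure Ω) [IsProbabilityMeasure μ]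
    (n p : ℕ) (hn : 0 < n)
    (y : Fin n → Ω → ℝ) (hy : ∀ k, MemLp (y k) 2 μ)
    (emb : Fin n → Fin (n - 1) → Fin n)
    (hembinj : ∀ k, Function.Injective (emb k))
    (hembne : ∀ k j, emb k j ≠ k)
    (x : Fin n → Fin p → ℝ)
    (Xdel : Fin n → Matrix (Fin (n - 1)) (Fin p) ℝ)
    (Sigdel : Fin n → Matrix (Fin (n - 1)) (Fin (n - 1)) ℝ)
    (H : Matrix (Fin n) (Fin n) ℝ)
    (hHdiag : ∀ k, H k k = 0)
    (hHrow : ∀ k j, H k (emb k j)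
      = Matrix.vecMul (x k)
          (((Xdel k)ᵀ * (Sigdel k)⁻¹ * Xdel k)⁻¹ * (Xdel k)ᵀ * (Sigdel k)⁻¹) j)
    (ytr : Fin (n - 1) → Ω → ℝ) (hytr : ∀ j, MemLp (ytr j) 2 μ)
    (yte : Ω → ℝ) (hyte : MemLp yte 2 μ)
    (hte : Fin (n - 1) → ℝ)
    (hmean : ∀ k, ∫ ω, y k ω ∂μ = ∫ ω, yte ω ∂μ)
    (hvar : ∀ k, eVar μ (y k) = eVar μ yte)
    (hmeanH : ∀ k, ∫ ω, (∑ j, H k j * y j ω) ∂μ = ∫ ω, (∑ j, hte j * ytr j ω) ∂μ)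
    (hvarH : ∀ k, eVar μ (fun ω => ∑ j, H k j * y j ω)
        = eVar μ (fun ω => ∑ j, hte j * ytr j ω))
    (hc : ∀ j, eCov μ (ytr j) yte = 0) :
    (∫ ω, (yte ω - ∑ j, hte j * ytr j ω) ^ 2 ∂μ)
        - (1 / (n : ℝ)) * ∫ ω, ∑ k, (y k ω - ∑ j, H k j * y j ω) ^ 2 ∂μ
      = (2 / (n : ℝ)) * ∑ k,
          (Matrix.vecMul (x k)
              (((Xdel k)ᵀ * (Sigdel k)⁻¹ * Xdel k)⁻¹ * (Xdel k)ᵀ * (Sigdel k)⁻¹))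
            ⬝ᵥ (fun j => eCov μ (y (emb k j)) (y k)) := by
  have hHy (k : Fin n) : MemLp (fun ω ↦ ∑ j, H k j * y j ω) 2 μ :=
    memLp_finsetSum _ fun j _ ↦ (hy j).const_mul _
  have hpred : MemLp (fun ω ↦ ∑ j, hte j * ytr j ω) 2 μ :=
    memLp_finsetSum _ fun j _ ↦ (hytr j).const_mul _
  have hcov_te : cov[yte, fun ω ↦ ∑ j, hte j * ytr j ω; μ] = 0 := by
    rw [covariance_linear_comb_right hytr hyte]
    exact Finset.sum_eq_zero fun j _ ↦ by rw [covariance_comm, ← eCov_eq_covariance, hc, mul_zero]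
  have hresid (k : Fin n) : ∫ ω, (y k ω - ∑ j, H k j * y j ω) ^ 2 ∂μ
      = ∫ ω, (yte ω - ∑ j, hte j * ytr j ω) ^ 2 ∂μ
        - 2 * (Matrix.vecMul (x k)
            (((Xdel k)ᵀ * (Sigdel k)⁻¹ * Xdel k)⁻¹ * (Xdel k)ᵀ * (Sigdel k)⁻¹))
          ⬝ᵥ (fun j => eCov μ (y (emb k j)) (y k)) := by
    rw [integral_sub_sq_eq_of_moments_eq (hy k) (hHy k) hyte hpred (hmean k) (hmeanH k)
      (by simpa [eVar_eq_variance, (hy k).aemeasurable, hyte.aemeasurable] using hvar k)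
      (by simpa [eVar_eq_variance, (hHy k).aemeasurable, hpred.aemeasurable] using hvarH k)
      hcov_te, covariance_row_eq_dotProduct hy (hHdiag k) (hembinj k) (hembne k)]
    simp_rw [hHrow, eCov_eq_covariance]
  rw [integral_finsetSum (f := fun k ω ↦ (y k ω - ∑ j, H k j * y j ω) ^ 2) _
    fun k _ ↦ ((hy k).sub (hHy k)).integrable_sq]
  simp_rw [hresid, Finset.sum_sub_distrib, ← Finset.mul_sum]
  simp only [Finset.sum_const, Finset.card_univ, Fintype.card_fin, nsmul_eq_mul]
  field_simp
  ring

/-- **The paper's fixed-design formula for `w_cv(GLS)`.** When the off-diagonal entries of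
the `k`-th row of the zero-diagonal CV hat matrix `H` form the GLS hat vector
`h_k = x_k^t (X_{-k}^t Σ_{-k}^{-1} X_{-k})^{-1} X_{-k}^t Σ_{-k}^{-1}` (rows of the deleted
sample indexed via the injection `emb k : Fin (n-1) → Fin n` avoiding `k`), under the
hypotheses of Theorem 2 and `Cov(y_tr, y_te) = 0`, the CV bias equals
`w_cv = (2/n) ∑_k h_k · σ_{-k,k}` where `σ_{-k,k} = (Cov(y_j, y_k))_{j ≠ k}`. -/
theorem cv_bias_gls
    {Ω : Type*} [MeasurableSpace Ω] (μ : Measure Ω) [IsProbabilityMeasure μ]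
    (n p : ℕ) (hn : 0 < n)
    (y : Fin n → Ω → ℝ) (hy : ∀ k, MemLp (y k) 2 μ)
    (emb : Fin n → Fin (n - 1) → Fin n)
    (hembinj : ∀ k, Function.Injective (emb k))
    (hembne : ∀ k j, emb k j ≠ k)
    (x : Fin n → Fin p → ℝ)
    (Xdel : Fin n → Matrix (Fin (n - 1)) (Fin p) ℝ)
    (hXdel : ∀ k j, Xdel k j = x (emb k j))
    (Sigdel : Fin n → Matrix (Fin (n - 1)) (Fin (n - 1)) ℝ)
    (hSigdel : ∀ k i j, Sigdel k i j = eCov μ (y (emb k i)) (y (emb k j)))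
    (hSigdelinv : ∀ k, IsUnit (Sigdel k).det)
    (hXSX : ∀ k, IsUnit ((Xdel k)ᵀ * (Sigdel k)⁻¹ * Xdel k).det)
    (H : Matrix (Fin n) (Fin n) ℝ)
    (hHdiag : ∀ k, H k k = 0)
    (hHrow : ∀ k j, H k (emb k j)
      = Matrix.vecMul (x k)
          (((Xdel k)ᵀ * (Sigdel k)⁻¹ * Xdel k)⁻¹ * (Xdel k)ᵀ * (Sigdel k)⁻¹) j)
    (ytr : Fin (n - 1) → Ω → ℝ) (hytr : ∀ j, MemLp (ytr j) 2 μ)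
    (yte : Ω → ℝ) (hyte : MemLp yte 2 μ)
    (hte : Fin (n - 1) → ℝ)
    (hmean : ∀ k, ∫ ω, y k ω ∂μ = ∫ ω, yte ω ∂μ)
    (hvar : ∀ k, eVar μ (y k) = eVar μ yte)
    (hmeanH : ∀ k, ∫ ω, (∑ j, H k j * y j ω) ∂μ = ∫ ω, (∑ j, hte j * ytr j ω) ∂μ)
    (hvarH : ∀ k, eVar μ (fun ω => ∑ j, H k j * y j ω)
        = eVar μ (fun ω => ∑ j, hte j * ytr j ω))
    (hc : ∀ j, eCov μ (ytr j) yte = 0) :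
    (∫ ω, (yte ω - ∑ j, hte j * ytr j ω) ^ 2 ∂μ)
        - (1 / (n : ℝ)) * ∫ ω, ∑ k, (y k ω - ∑ j, H k j * y j ω) ^ 2 ∂μ
      = (2 / (n : ℝ)) * ∑ k,
          (Matrix.vecMul (x k)
              (((Xdel k)ᵀ * (Sigdel k)⁻¹ * Xdel k)⁻¹ * (Xdel k)ᵀ * (Sigdel k)⁻¹))
            ⬝ᵥ (fun j => eCov μ (y (emb k j)) (y k)) :=
  cv_bias_gls_general μ n p hn y hy emb hembinj hembne x Xdel Sigdel H hHdiag hHrow ytr hytr yte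
    hyte hte hmean hvar hmeanH hvarH hc
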